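/- Let Δ = Δ_0 + Δ_1 + ⋯ + Δ_k be a Minkowski sum decomposition of a reflexive polytope Δ ⊂ ℝ^d into lattice polytopes. Define Δ̂_0 = Conv(Δ_0, Δ_1 + e_1, …, Δ_k + e_k), Δ̂_i = Δ̂_0 − e_i for i = 1,…,k, and Δ̃_i = Conv((Δ_i + e_i) ∪ {0}) for i = 0,…,k, all in ℝ^d ⊕ ℝ^k, where e_0 = −(e_1+⋯+e_k). Then the linear map φ* : ℝ^d ⊕ ℝ^k → ℝ^d ⊕ ℝ^k defined by φ*(n + Σ_{i=1}^k α_i e_i*) = (k+1)n + Σ_{i=1}^k α_i ((k+1)e_i* + e_0*) for n ∈ ℝ^d, where e_0* = −(e_1*+⋯+e_k*), maps the dual polytope (Δ̂_0 + Δ̂_1 + ⋯ + Δ̂_k)* bijectively onto (Δ̃_0 ⊎ Δ̃_1 ⊎ ⋯ ⊎ Δ̃_k)*. -/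

import Mathlib

open scoped Pointwise
open Set

noncomputable section

/-- The standard pairing on `ℝ^n`. -/
def pairing {n : ℕ} (x y : Fin n → ℝ) : ℝ := ∑ i, x i * y i

/-- A point of `ℝ^n` lying in the lattice `ℤ^n`. -/
def IsLatticePt {n : ℕ} (x : Fin n → ℝ) : Prop := ∀ i, ∃ z : ℤ, x i = (z : ℝ)

/-- A lattice polytope: the convex hull of finitely many lattice points. -/
def IsLatticePolytope {n : ℕ} (P : Set (Fin n → ℝ)) : Prop :=
  ∃ S : Set (Fin n → ℝ), S.Finite ∧ (∀ x ∈ S, IsLatticePt x) ∧ P = convexHull ℝ S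

/-- The dual polytope `P* = {y | ⟨x,y⟩ ≥ -1 ∀ x ∈ P}`. -/
def polarDual {n : ℕ} (P : Set (Fin n → ℝ)) : Set (Fin n → ℝ) :=
  {y | ∀ x ∈ P, -1 ≤ pairing x y}

/-- A reflexive polytope. -/
def IsReflexive {n : ℕ} (P : Set (Fin n → ℝ)) : Prop :=
  IsLatticePolytope P ∧ (0 : Fin n → ℝ) ∈ interior P ∧ IsLatticePolytope (polarDual P)

/-- `min⟨P, u⟩ = min_{x ∈ P} ⟨x, u⟩`. -/
def minPair {n : ℕ} (P : Set (Fin n → ℝ)) (u : Fin n → ℝ) : ℝ :=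
  sInf ((fun x => pairing x u) '' P)

/-- The real vector space `ℝ^d ⊕ ℝ^k`. -/
abbrev Vdk (d k : ℕ) := (Fin d → ℝ) × (Fin k → ℝ)

/-- The pairing on `ℝ^d ⊕ ℝ^k` (sum of the two standard pairings). -/
def pairingV {d k : ℕ} (x y : Vdk d k) : ℝ := pairing x.1 y.1 + pairing x.2 y.2

def IsLatticePtV {d k : ℕ} (x : Vdk d k) : Prop := IsLatticePt x.1 ∧ IsLatticePt x.2

def IsLatticePolytopeV {d k : ℕ} (P : Set (Vdk d k)) : Prop :=
  ∃ S : Set (Vdk d k), S.Finite ∧ (∀ x ∈ S, IsLatticePtV x) ∧ P = convexHull ℝ S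

def polarDualV {d k : ℕ} (P : Set (Vdk d k)) : Set (Vdk d k) :=
  {y | ∀ x ∈ P, -1 ≤ pairingV x y}

def IsReflexiveV {d k : ℕ} (P : Set (Vdk d k)) : Prop :=
  IsLatticePolytopeV P ∧ (0 : Vdk d k) ∈ interior P ∧ IsLatticePolytopeV (polarDualV P)

/-- The Cayley cone `σ̄ = {(t₀Δ₀ + ⋯ + t_kΔ_k, t₀, …, t_k) : tᵢ ≥ 0} ⊆ ℝ^d ⊕ ℝ^{k+1}`. -/
def cayleyCone {d k : ℕ} (Δ : Fin (k+1) → Set (Fin d → ℝ)) : Set (Vdk d (k+1)) :=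
  {p | (∀ i, 0 ≤ p.2 i) ∧ p.1 ∈ ∑ i, p.2 i • Δ i}

/-- The dual cone of a cone in `ℝ^d ⊕ ℝ^k`. -/
def dualConeV {d k : ℕ} (σ : Set (Vdk d k)) : Set (Vdk d k) :=
  {y | ∀ x ∈ σ, 0 ≤ pairingV x y}

/-- `e₀ = −(e₁ + ⋯ + e_k)`, `eᵢ` the standard basis of the second factor `ℝ^k`. -/
def evec {k : ℕ} : Fin (k+1) → Fin k → ℝ :=
  Fin.cases (fun _ => -1) (fun i => Pi.single i 1)

/-- The linear map `φ*(n + Σᵢ₌₁ᵏ αᵢeᵢ*) = (k+1)n + Σᵢ₌₁ᵏ αᵢ((k+1)eᵢ* + e₀*)`. -/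
def phiStar {d k : ℕ} : Vdk d k → Vdk d k :=
  fun p => (((k : ℝ) + 1) • p.1, fun j => ((k : ℝ) + 1) * p.2 j - ∑ i, p.2 i)

/-!
For `y = (n, α)` put `T = ∑ⱼ αⱼ`, and let `ε₀ = 0`, `εᵢ = eᵢ` (`evecHat`), so that
`Δ̂₀ = Conv(Δᵢ + εᵢ)`. A point of `Δ̂₀ + ⋯ + Δ̂_k` is `q₀ + ⋯ + q_k − (e₁ + ⋯ + e_k)` with all
`qᵢ ∈ Δ̂₀`, so `y` lies in its dual iff `(k+1)⟨q, y⟩ ≥ T − 1` for `q ∈ Δ̂₀`, i.e. for the points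
`(x, εᵢ)` with `x ∈ Δᵢ`. The dual of `Δ̃₀ ⊎ ⋯ ⊎ Δ̃_k` is cut out by the points `(x, eᵢ)` with
`x ∈ Δᵢ`, and `⟨(x, eᵢ), φ*y⟩ = (k+1)⟨(x, εᵢ), y⟩ − T`. So `y` satisfies the first condition iff
`φ*y` satisfies the second, and `φ*` is invertible.
-/

section PolarDual

variable {d k : ℕ}

lemma pairing_eq_dotProduct {n : ℕ} (x y : Fin n → ℝ) : pairing x y = x ⬝ᵥ y := rfl

def pairingVLeft (y : Vdk d k) : Vdk d k →ₗ[ℝ] ℝ where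
  toFun x := pairingV x y
  map_add' a b := by
    simp only [pairingV, pairing_eq_dotProduct, Prod.fst_add, Prod.snd_add, add_dotProduct]
    ring
  map_smul' c a := by
    simp only [pairingV, pairing_eq_dotProduct, Prod.smul_fst, Prod.smul_snd, smul_dotProduct,
      smul_eq_mul, RingHom.id_apply, mul_add]

@[simp] lemma pairingVLeft_apply (x y : Vdk d k) : pairingVLeft y x = pairingV x y := rfl

lemma forall_mem_convexHull_le_iff {E : Type*} [AddCommGroup E] [Module ℝ E] {s : Set E}
    (f : E →ₗ[ℝ] ℝ) (c : ℝ) : (∀ x ∈ convexHull ℝ s, c ≤ f x) ↔ ∀ x ∈ s, c ≤ f x :=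
  ⟨fun h x hx => h x (subset_convexHull ℝ s hx),
    fun h _ hx => convexHull_min h (convex_halfSpace_ge f.isLinear c) hx⟩

lemma polarDualV_convexHull (S : Set (Vdk d k)) : polarDualV (convexHull ℝ S) = polarDualV S := by
  ext y
  exact forall_mem_convexHull_le_iff (pairingVLeft y) (-1)

lemma polarDualV_iUnion {ι : Type*} (S : ι → Set (Vdk d k)) :
    polarDualV (⋃ i, S i) = ⋂ i, polarDualV (S i) := by
  ext y
  simp only [polarDualV, mem_iUnion, mem_iInter, mem_ofPred_eq, forall_exists_index]
  exact forall_comm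

lemma polarDualV_union_zero (S : Set (Vdk d k)) : polarDualV (S ∪ {0}) = polarDualV S := by
  ext y
  simp [polarDualV, pairingV, pairing]

lemma forall_le_sum_iff_forall_le_card_mul {ι α : Type*} [Fintype ι] [Nonempty ι] (s : Set α)
    (f : α → ℝ) (c : ℝ) :
    (∀ g : ι → α, (∀ i, g i ∈ s) → c ≤ ∑ i, f (g i)) ↔ ∀ a ∈ s, c ≤ Fintype.card ι * f a := by
  have hcard : (0 : ℝ) < Fintype.card ι := by exact_mod_cast Fintype.card_pos
  constructor
  · intro h a ha
    simpa [Finset.sum_const, nsmul_eq_mul] using h (fun _ => a) fun _ => ha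
  · intro h g hg
    calc c = ∑ _i : ι, c / Fintype.card ι := by
          rw [Finset.sum_const, Finset.card_univ, nsmul_eq_mul]
          field_simp
      _ ≤ ∑ i, f (g i) :=
          Finset.sum_le_sum fun i _ => (div_le_iff₀' hcard).2 (h _ (hg i))

lemma mem_polarDualV_sum_image_sub_iff {ι : Type*} [Fintype ι] [Nonempty ι] (Q : Set (Vdk d k))
    (v : ι → Vdk d k) (y : Vdk d k) :
    y ∈ polarDualV (∑ i, (· - v i) '' Q) ↔
      ∀ q ∈ Q, ∑ i, pairingV (v i) y - 1 ≤ Fintype.card ι * pairingV q y := by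
  have hpair (g : ι → Vdk d k) :
      pairingV (∑ i, (g i - v i)) y = ∑ i, pairingV (g i) y - ∑ i, pairingV (v i) y := by
    simp only [← pairingVLeft_apply, map_sum, map_sub, Finset.sum_sub_distrib]
  rw [← forall_le_sum_iff_forall_le_card_mul Q (pairingV · y)]
  simp only [polarDualV, mem_ofPred_eq, mem_fintype_sum, mem_image]
  constructor
  · intro h g hg
    have := h _ ⟨fun i => g i - v i, fun i => ⟨g i, hg i, rfl⟩, rfl⟩
    rw [hpair] at this
    linarith
  · rintro h _ ⟨w, hw, rfl⟩
    choose g hgQ hgw using hw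
    obtain rfl : w = fun i => g i - v i := funext fun i => (hgw i).symm
    rw [hpair]
    linarith [h g hgQ]

end PolarDual

section Cayley

variable {d k : ℕ}

def evecHat : Fin (k+1) → Fin k → ℝ :=
  Fin.cases 0 (fun i => Pi.single i 1)

lemma union_image_eq_iUnion_image_evecHat (Δ : Fin (k+1) → Set (Fin d → ℝ)) :
    (fun x => ((x, 0) : Vdk d k)) '' Δ 0 ∪
        ⋃ i : Fin k, (fun x => ((x, Pi.single i 1) : Vdk d k)) '' Δ i.succ =
      ⋃ i, (fun x => ((x, evecHat i) : Vdk d k)) '' Δ i := by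
  ext p
  simp [Fin.exists_fin_succ, evecHat]

lemma finCases_image_sub_single_eq (Q : Set (Vdk d k)) :
    (Fin.cases Q (fun i => (fun y => y - (((0 : Fin d → ℝ), Pi.single i 1) : Vdk d k)) '' Q) :
        Fin (k+1) → Set (Vdk d k)) =
      fun i => (· - ((0, evecHat i) : Vdk d k)) '' Q := by
  funext i
  cases i using Fin.cases <;> simp [evecHat, Prod.mk_zero_zero, image_id']

lemma sum_pairingV_evecHat (y : Vdk d k) :
    ∑ i, pairingV (((0 : Fin d → ℝ), evecHat i) : Vdk d k) y = ∑ j, y.2 j := by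
  simp [Fin.sum_univ_succ, evecHat, pairingV, pairing_eq_dotProduct]

lemma sum_phiStar_snd (y : Vdk d k) : ∑ j, (phiStar y).2 j = ∑ j, y.2 j := by
  simp only [phiStar, Finset.sum_sub_distrib, Finset.sum_const, Finset.card_univ,
    Fintype.card_fin, ← Finset.mul_sum, nsmul_eq_mul]
  ring

lemma pairingV_evec_phiStar (x : Fin d → ℝ) (i : Fin (k+1)) (y : Vdk d k) :
    pairingV (x, evec i) (phiStar y) = ((k:ℝ)+1) * pairingV (x, evecHat i) y - ∑ j, y.2 j := by
  have hfst : pairing x (phiStar y).1 = ((k:ℝ)+1) * pairing x y.1 := by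
    simp [phiStar, pairing_eq_dotProduct]
  cases i using Fin.cases with
  | zero =>
    have hsnd : pairing (evec 0) (phiStar y).2 = -∑ j, y.2 j := by
      rw [← sum_phiStar_snd]
      simp [evec, pairing]
    simp only [pairingV, hfst, hsnd, evecHat, Fin.cases_zero, pairing_eq_dotProduct,
      zero_dotProduct, add_zero, ← sub_eq_add_neg]
  | succ i =>
    simp only [pairingV, phiStar, pairing_eq_dotProduct, dotProduct_smul, smul_eq_mul, evec,
      evecHat, Fin.cases_succ, single_dotProduct, one_mul]
    ring

lemma phiStar_bijective : Function.Bijective (phiStar (d := d) (k := k)) := by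
  have hk : ((k:ℝ)+1) ≠ 0 := by positivity
  refine Function.bijective_iff_has_inverse.2
    ⟨fun p => (((k:ℝ)+1)⁻¹ • p.1, fun j => (p.2 j + ∑ i, p.2 i) / ((k:ℝ)+1)), ?_, ?_⟩
  · intro y
    ext j
    · simp [phiStar, hk]
    · simp only [sum_phiStar_snd]
      simp only [phiStar, sub_add_cancel]
      field_simp
  · intro z
    have hsum : ∑ i, (z.2 i + ∑ i, z.2 i) / ((k:ℝ)+1) = ∑ i, z.2 i := by
      rw [← Finset.sum_div, Finset.sum_add_distrib, Finset.sum_const, Finset.card_univ,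
        Fintype.card_fin, nsmul_eq_mul]
      field_simp
      ring
    ext j
    · simp [phiStar, hk]
    · simp only [phiStar, hsum]
      field_simp
      ring

lemma mem_polarDualV_sum_hat_iff (Δ : Fin (k+1) → Set (Fin d → ℝ)) (y : Vdk d k) :
    y ∈ polarDualV (∑ i, (· - ((0, evecHat i) : Vdk d k)) ''
        convexHull ℝ (⋃ i, (fun x => ((x, evecHat i) : Vdk d k)) '' Δ i)) ↔
      ∀ i, ∀ x ∈ Δ i, -1 ≤ ((k:ℝ)+1) * pairingV (x, evecHat i) y - ∑ j, y.2 j := by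
  rw [mem_polarDualV_sum_image_sub_iff, sum_pairingV_evecHat, Fintype.card_fin]
  push_cast
  refine (forall_mem_convexHull_le_iff (((k:ℝ)+1) • pairingVLeft y) _).trans ?_
  simp only [LinearMap.smul_apply, pairingVLeft_apply, smul_eq_mul, mem_iUnion,
    forall_exists_index, forall_comm (α := Vdk d k), forall_mem_image, sub_le_iff_le_add,
    neg_le_sub_iff_le_add]

lemma phiStar_mem_polarDualV_tilde_iff (Δ : Fin (k+1) → Set (Fin d → ℝ)) (y : Vdk d k) :
    phiStar y ∈ polarDualV (convexHull ℝ
        (⋃ i, convexHull ℝ ((fun x => ((x, evec i) : Vdk d k)) '' Δ i ∪ {0}))) ↔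
      ∀ i, ∀ x ∈ Δ i, -1 ≤ ((k:ℝ)+1) * pairingV (x, evecHat i) y - ∑ j, y.2 j := by
  simp only [polarDualV_convexHull, polarDualV_iUnion, polarDualV_union_zero, mem_iInter]
  simp [polarDualV, pairingV_evec_phiStar]

end Cayley

theorem phiStar_maps_dual_hat_to_dual_tilde_general {d k : ℕ}
    (Δ : Fin (k+1) → Set (Fin d → ℝ))
    -- Δ̂₀ = Conv(Δ₀, Δ₁ + e₁, …, Δ_k + e_k)
    (Q : Set (Vdk d k))
    (hQ : Q = convexHull ℝ ((fun x => ((x, 0) : Vdk d k)) '' Δ 0 ∪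
        ⋃ i : Fin k, (fun x => ((x, Pi.single i 1) : Vdk d k)) '' Δ i.succ))
    -- Δ̂ᵢ = Δ̂₀ − eᵢ for i = 1, …, k
    (Δhat : Fin (k+1) → Set (Vdk d k))
    (hΔhat : Δhat = Fin.cases Q
        (fun i => (fun y => y - (((0 : Fin d → ℝ), Pi.single i 1) : Vdk d k)) '' Q))
    -- Δ̃ᵢ = Conv((Δᵢ + eᵢ) ∪ {0}) for i = 0, …, k
    (Δtilde : Fin (k+1) → Set (Vdk d k))
    (hΔtilde : Δtilde = fun i =>
        convexHull ℝ ((fun x => ((x, evec i) : Vdk d k)) '' Δ i ∪ {0})) :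
    Set.BijOn (phiStar (d := d) (k := k))
      (polarDualV (∑ i, Δhat i))
      (polarDualV (convexHull ℝ (⋃ i, Δtilde i))) := by
  subst hΔhat hΔtilde
  rw [finCases_image_sub_single_eq, hQ, union_image_eq_iUnion_image_evecHat]
  convert phiStar_bijective.bijOn_preimage using 1
  ext y
  exact (mem_polarDualV_sum_hat_iff Δ y).trans (phiStar_mem_polarDualV_tilde_iff Δ y).symm

/-- `φ*` maps `(Δ̂₀ + Δ̂₁ + ⋯ + Δ̂_k)*` bijectively onto
`(Δ̃₀ ⊎ Δ̃₁ ⊎ ⋯ ⊎ Δ̃_k)*`. -/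
theorem phiStar_maps_dual_hat_to_dual_tilde {d k : ℕ}
    (Δ : Fin (k+1) → Set (Fin d → ℝ))
    (hlat : ∀ i, IsLatticePolytope (Δ i))
    (hrefl : IsReflexive (∑ i, Δ i))
    -- Δ̂₀ = Conv(Δ₀, Δ₁ + e₁, …, Δ_k + e_k)
    (Q : Set (Vdk d k))
    (hQ : Q = convexHull ℝ ((fun x => ((x, 0) : Vdk d k)) '' Δ 0 ∪
        ⋃ i : Fin k, (fun x => ((x, Pi.single i 1) : Vdk d k)) '' Δ i.succ))
    -- Δ̂ᵢ = Δ̂₀ − eᵢ for i = 1, …, k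
    (Δhat : Fin (k+1) → Set (Vdk d k))
    (hΔhat : Δhat = Fin.cases Q
        (fun i => (fun y => y - (((0 : Fin d → ℝ), Pi.single i 1) : Vdk d k)) '' Q))
    -- Δ̃ᵢ = Conv((Δᵢ + eᵢ) ∪ {0}) for i = 0, …, k
    (Δtilde : Fin (k+1) → Set (Vdk d k))
    (hΔtilde : Δtilde = fun i =>
        convexHull ℝ ((fun x => ((x, evec i) : Vdk d k)) '' Δ i ∪ {0})) :
    Set.BijOn (phiStar (d := d) (k := k))
      (polarDualV (∑ i, Δhat i))
      (polarDualV (convexHull ℝ (⋃ i, Δtilde i))) :=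
  phiStar_maps_dual_hat_to_dual_tilde_general Δ Q hQ Δhat hΔhat Δtilde hΔtilde
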